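/- arXiv:math/0602168 — 2 statements merged into one kernel-verified Lean document; each statement's English description precedes it below -/
import Mathlib

section
/- Let j_a and j_b be compatible positive complex structures on (E, ω). With respect to the inner products ⟨α, β⟩_j := i^{n(2−n)} · (α ∧ β̄ / ω^{∧n}) on Λ^{n,0}_j E*, the adjoint of Ψ_{j_a,j_b} is Ψ_{j_b,j_a}: for all α ∈ Λ^{n,0}_{j_a}E* and β ∈ Λ^{n,0}_{j_b}E*, ⟨Ψ_{j_a,j_b}(α), β⟩_{j_b} = ⟨α, Ψ_{j_b,j_a}(β)⟩_{j_a}. -/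
open Complex

noncomputable section

variable {E : Type*} [AddCommGroup E] [Module ℝ E]

/-- `j` is a complex structure on `E`: `j ∘ j = -id`. -/
def IsCplxStruct (j : E →ₗ[ℝ] E) : Prop := ∀ x : E, j (j x) = -x

/-- `j` is compatible with the symplectic form `ω`. -/
def OmCompat (ω : E [⋀^Fin 2]→ₗ[ℝ] ℝ) (j : E →ₗ[ℝ] E) : Prop :=
  ∀ x y : E, ω ![j x, j y] = ω ![x, y]

/-- `j` is positive with respect to `ω`. -/
def OmPos (ω : E [⋀^Fin 2]→ₗ[ℝ] ℝ) (j : E →ₗ[ℝ] E) : Prop :=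
  ∀ x : E, x ≠ 0 → 0 < ω ![x, j x]

/-- `ω` is nondegenerate. -/
def OmNondeg (ω : E [⋀^Fin 2]→ₗ[ℝ] ℝ) : Prop :=
  ∀ x : E, (∀ y : E, ω ![x, y] = 0) → x = 0

/-- The complex conjugate of a `ℂ`-valued alternating form. -/
def conjAlt {p : ℕ} (α : E [⋀^Fin p]→ₗ[ℝ] ℂ) : E [⋀^Fin p]→ₗ[ℝ] ℂ :=
  Complex.conjAe.toLinearMap.compAlternatingMap α

/-- Wedge product of `ℂ`-valued alternating forms. -/
def wedgeC {p q : ℕ} (α : E [⋀^Fin p]→ₗ[ℝ] ℂ) (β : E [⋀^Fin q]→ₗ[ℝ] ℂ) :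
    E [⋀^Fin (p + q)]→ₗ[ℝ] ℂ :=
  ((LinearMap.mul' ℝ ℂ).compAlternatingMap (α.domCoprod β)).domDomCongr finSumFinEquiv

/-- The complexification of a real-valued alternating form. -/
def cplxForm {p : ℕ} (ω : E [⋀^Fin p]→ₗ[ℝ] ℝ) : E [⋀^Fin p]→ₗ[ℝ] ℂ :=
  (Algebra.linearMap ℝ ℂ).compAlternatingMap ω

/-- `ω^{∧ m}`. -/
def omPow (ω : E [⋀^Fin 2]→ₗ[ℝ] ℝ) : (m : ℕ) → E [⋀^Fin (2 * m)]→ₗ[ℝ] ℂ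
  | 0 => (AlternatingMap.constOfIsEmpty ℝ E (Fin 0) 1).domDomCongr (finCongr (by ring))
  | (m + 1) => (wedgeC (cplxForm ω) (omPow ω m)).domDomCongr (finCongr (by ring))

/-- `ω^{∧ n}`, reindexed by `Fin (n + n)`. -/
def topPow (ω : E [⋀^Fin 2]→ₗ[ℝ] ℝ) (n : ℕ) : E [⋀^Fin (n + n)]→ₗ[ℝ] ℂ :=
  (omPow ω n).domDomCongr (finCongr (by ring))

/-- `Λ^{n,0}_j E*`: the space of `ℂ`-valued alternating `p`-forms `α` with
`α (j v₁, v₂, …, v_p) = i • α (v₁, …, v_p)`. -/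
def Lam (j : E →ₗ[ℝ] E) (p : ℕ) : Submodule ℂ (E [⋀^Fin p]→ₗ[ℝ] ℂ) where
  carrier := {α | ∀ (v : Fin p → E) (i : Fin p), (i : ℕ) = 0 →
    α (Function.update v i (j (v i))) = Complex.I * α v}
  add_mem' := by
    intro a b ha hb v i hi
    simp only [AlternatingMap.add_apply, ha v i hi, hb v i hi]
    ring
  zero_mem' := by
    intro v i hi
    simp
  smul_mem' := by
    intro c a ha v i hi
    simp only [AlternatingMap.smul_apply, ha v i hi, smul_eq_mul]
    ring

/-- The scalar `α ∧ β̄ / ω^{∧ n}`. -/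
def pairing (ω : E [⋀^Fin 2]→ₗ[ℝ] ℝ) (n : ℕ) (α β : E [⋀^Fin n]→ₗ[ℝ] ℂ) : ℂ :=
  letI := Classical.propDecidable (∃ c : ℂ, wedgeC α (conjAlt β) = c • topPow ω n)
  if h : ∃ c : ℂ, wedgeC α (conjAlt β) = c • topPow ω n then h.choose else 0

/-- The defining property of `Ψ_{j_a,j_b}`. -/
def PsiProp (ω : E [⋀^Fin 2]→ₗ[ℝ] ℝ) (n : ℕ) (ja jb : E →ₗ[ℝ] E)
    (Ψ : Lam ja n →ₗ[ℂ] Lam jb n) : Prop :=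
  ∀ α β : Lam ja n,
    wedgeC ((Ψ α : E [⋀^Fin n]→ₗ[ℝ] ℂ)) (conjAlt (β : E [⋀^Fin n]→ₗ[ℝ] ℂ)) =
      wedgeC (α : E [⋀^Fin n]→ₗ[ℝ] ℂ) (conjAlt (β : E [⋀^Fin n]→ₗ[ℝ] ℂ))

/-- The Hermitian form `⟨α, β⟩_j := i^{n(2−n)} · (α ∧ β̄ / ω^{∧n})`. -/
def hermForm (ω : E [⋀^Fin 2]→ₗ[ℝ] ℝ) (n : ℕ) (α β : E [⋀^Fin n]→ₗ[ℝ] ℂ) : ℂ :=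
  Complex.I ^ ((n : ℤ) * (2 - (n : ℤ))) * pairing ω n α β

/-!
Conjugating the defining identity `Ψ_{b,a} β ∧ conj (Ψ_{a,b} α) = β ∧ conj (Ψ_{a,b} α)` and swapping
the two factors (both of degree `n`, so the same sign appears on each side) gives
`Ψ_{a,b} α ∧ conj (Ψ_{b,a} β) = Ψ_{a,b} α ∧ conj β`. The defining identity of `Ψ_{a,b}` rewrites the
left side as `α ∧ conj (Ψ_{b,a} β)`, so the two top forms whose ratios to `ω^{∧n}` define
`⟨Ψ_{a,b} α, β⟩_b` and `⟨α, Ψ_{b,a} β⟩_a` are equal. Conjugation and graded commutativity of the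
wedge product both follow from `α ∧ β = (p! q!)⁻¹ • Alt (α ⊗ β)`.
-/

open Equiv

theorem MultilinearMap.alternatization_domDomCongr {R M N ι : Type*} [Semiring R]
    [AddCommMonoid M] [Module R M] [AddCommGroup N] [Module R N] [Fintype ι] [DecidableEq ι]
    (m : MultilinearMap R (fun _ : ι => M) N) (σ : Perm ι) :
    (m.domDomCongr σ).alternatization = Perm.sign σ • m.alternatization := by
  ext v
  rw [AlternatingMap.smul_apply, alternatization_apply, alternatization_apply, Finset.smul_sum]
  refine Fintype.sum_equiv (Equiv.mulRight σ) _ _ fun τ => ?_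
  rw [← domDomCongr_mul, coe_mulRight, Perm.sign_mul, smul_smul, mul_left_comm,
    Int.units_mul_self, mul_one]

section WedgeProduct

variable {R A B M ιa ιb : Type*} [Field R] [CharZero R] [CommRing A] [Algebra R A]
  [CommRing B] [Algebra R B] [AddCommGroup M] [Module R M]
  [Fintype ιa] [DecidableEq ιa] [Fintype ιb] [DecidableEq ιb]

theorem AlternatingMap.mul'_domCoprod_eq_smul_alternatization
    (α : M [⋀^ιa]→ₗ[R] A) (β : M [⋀^ιb]→ₗ[R] A) :
    (LinearMap.mul' R A).compAlternatingMap (α.domCoprod β) =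
      ((Fintype.card ιa).factorial * (Fintype.card ιb).factorial : R)⁻¹ •
        ((LinearMap.mul' R A).compMultilinearMap
          (MultilinearMap.domCoprod (α : MultilinearMap R (fun _ => M) A) β)).alternatization := by
  rw [LinearMap.compMultilinearMap_alternatization, MultilinearMap.domCoprod_alternization_eq,
    LinearMap.compAlternatingMap_smul, ← Nat.cast_smul_eq_nsmul R, smul_smul, Nat.cast_mul,
    inv_mul_cancel₀ (by simp [Nat.factorial_ne_zero]), one_smul]

theorem AlgHom.compAlternatingMap_mul'_domCoprod (φ : A →ₐ[R] B)
    (α : M [⋀^ιa]→ₗ[R] A) (β : M [⋀^ιb]→ₗ[R] A) :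
    φ.toLinearMap.compAlternatingMap ((LinearMap.mul' R A).compAlternatingMap (α.domCoprod β)) =
      (LinearMap.mul' R B).compAlternatingMap
        ((φ.toLinearMap.compAlternatingMap α).domCoprod (φ.toLinearMap.compAlternatingMap β)) := by
  rw [AlternatingMap.mul'_domCoprod_eq_smul_alternatization,
    AlternatingMap.mul'_domCoprod_eq_smul_alternatization, LinearMap.compAlternatingMap_smul,
    ← LinearMap.compMultilinearMap_alternatization]
  congr 2
  ext v
  simp [MultilinearMap.domCoprod_apply]

theorem AlternatingMap.mul'_domCoprod_comm {ι : Type*} [Fintype ι] [DecidableEq ι]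
    (α β : M [⋀^ι]→ₗ[R] A) :
    (LinearMap.mul' R A).compAlternatingMap (β.domCoprod α) =
      Perm.sign (sumComm ι ι) • (LinearMap.mul' R A).compAlternatingMap (α.domCoprod β) := by
  rw [mul'_domCoprod_eq_smul_alternatization, mul'_domCoprod_eq_smul_alternatization,
    smul_comm, ← MultilinearMap.alternatization_domDomCongr]
  congr 2
  ext v
  simp [MultilinearMap.domCoprod_apply, mul_comm, sumComm]

end WedgeProduct

theorem conjAlt_conjAlt {p : ℕ} (α : E [⋀^Fin p]→ₗ[ℝ] ℂ) : conjAlt (conjAlt α) = α := by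
  ext v
  simp [conjAlt]

theorem conjAlt_wedgeC {p q : ℕ} (α : E [⋀^Fin p]→ₗ[ℝ] ℂ) (β : E [⋀^Fin q]→ₗ[ℝ] ℂ) :
    conjAlt (wedgeC α β) = wedgeC (conjAlt α) (conjAlt β) :=
  congrArg (AlternatingMap.domDomCongr finSumFinEquiv)
    (Complex.conjAe.toAlgHom.compAlternatingMap_mul'_domCoprod α β)

theorem wedgeC_comm {n : ℕ} (α β : E [⋀^Fin n]→ₗ[ℝ] ℂ) :
    wedgeC β α = Perm.sign (sumComm (Fin n) (Fin n)) • wedgeC α β := by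
  rw [wedgeC, AlternatingMap.mul'_domCoprod_comm]
  rfl

theorem conjAlt_wedgeC_conjAlt {n : ℕ} (α β : E [⋀^Fin n]→ₗ[ℝ] ℂ) :
    conjAlt (wedgeC β (conjAlt α)) =
      Perm.sign (sumComm (Fin n) (Fin n)) • wedgeC α (conjAlt β) := by
  rw [conjAlt_wedgeC, conjAlt_conjAlt, wedgeC_comm]

theorem PsiProp.wedgeC_conjAlt_adjoint {ω : E [⋀^Fin 2]→ₗ[ℝ] ℝ} {n : ℕ} {ja jb : E →ₗ[ℝ] E}
    {Ψab : Lam ja n →ₗ[ℂ] Lam jb n} {Ψba : Lam jb n →ₗ[ℂ] Lam ja n}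
    (hΨab : PsiProp ω n ja jb Ψab) (hΨba : PsiProp ω n jb ja Ψba) (α : Lam ja n) (β : Lam jb n) :
    wedgeC (Ψab α : E [⋀^Fin n]→ₗ[ℝ] ℂ) (conjAlt (β : E [⋀^Fin n]→ₗ[ℝ] ℂ)) =
      wedgeC (α : E [⋀^Fin n]→ₗ[ℝ] ℂ) (conjAlt (Ψba β : E [⋀^Fin n]→ₗ[ℝ] ℂ)) := by
  have h := congrArg conjAlt (hΨba β (Ψab α))
  rw [conjAlt_wedgeC_conjAlt, conjAlt_wedgeC_conjAlt] at h
  rw [← smul_left_cancel _ h, hΨab α (Ψba β)]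

theorem hermForm_eq_of_wedgeC_conjAlt_eq {ω : E [⋀^Fin 2]→ₗ[ℝ] ℝ} {n : ℕ}
    {α β α' β' : E [⋀^Fin n]→ₗ[ℝ] ℂ} (h : wedgeC α (conjAlt β) = wedgeC α' (conjAlt β')) :
    hermForm ω n α β = hermForm ω n α' β' := by
  unfold hermForm pairing
  rw [h]

theorem statement3_general {E : Type*} [AddCommGroup E] [Module ℝ E]
    (n : ℕ) (ω : E [⋀^Fin 2]→ₗ[ℝ] ℝ)
    (ja jb : E →ₗ[ℝ] E)
    (Ψab : Lam ja n →ₗ[ℂ] Lam jb n) (hΨab : PsiProp ω n ja jb Ψab)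
    (Ψba : Lam jb n →ₗ[ℂ] Lam ja n) (hΨba : PsiProp ω n jb ja Ψba) :
    ∀ (α : Lam ja n) (β : Lam jb n),
      hermForm ω n ((Ψab α : E [⋀^Fin n]→ₗ[ℝ] ℂ)) (β : E [⋀^Fin n]→ₗ[ℝ] ℂ) =
        hermForm ω n (α : E [⋀^Fin n]→ₗ[ℝ] ℂ) ((Ψba β : E [⋀^Fin n]→ₗ[ℝ] ℂ)) :=
  fun α β => hermForm_eq_of_wedgeC_conjAlt_eq (hΨab.wedgeC_conjAlt_adjoint hΨba α β)

/-- the adjoint of `Ψ_{j_a,j_b}` is `Ψ_{j_b,j_a}`: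
`⟨Ψ_{j_a,j_b} α, β⟩_{j_b} = ⟨α, Ψ_{j_b,j_a} β⟩_{j_a}`. -/
theorem statement3 {E : Type*} [AddCommGroup E] [Module ℝ E] [FiniteDimensional ℝ E]
    (n : ℕ) (hn : 0 < n) (ω : E [⋀^Fin 2]→ₗ[ℝ] ℝ)
    (hdim : Module.finrank ℝ E = 2 * n) (hnd : OmNondeg ω)
    (ja jb : E →ₗ[ℝ] E) (hja : IsCplxStruct ja) (hjb : IsCplxStruct jb)
    (hca : OmCompat ω ja) (hcb : OmCompat ω jb)
    (hpa : OmPos ω ja) (hpb : OmPos ω jb)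
    (Ψab : Lam ja n →ₗ[ℂ] Lam jb n) (hΨab : PsiProp ω n ja jb Ψab)
    (Ψba : Lam jb n →ₗ[ℂ] Lam ja n) (hΨba : PsiProp ω n jb ja Ψba) :
    ∀ (α : Lam ja n) (β : Lam jb n),
      hermForm ω n ((Ψab α : E [⋀^Fin n]→ₗ[ℝ] ℂ)) (β : E [⋀^Fin n]→ₗ[ℝ] ℂ) =
        hermForm ω n (α : E [⋀^Fin n]→ₗ[ℝ] ℂ) ((Ψba β : E [⋀^Fin n]→ₗ[ℝ] ℂ)) :=
  statement3_general n ω ja jb Ψab hΨab Ψba hΨba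

end
end

section
/- For all compatible positive complex structures j_a, j_b, j_c, j_d on (E, ω), the cocycle relation ζ(j_b,j_c,j_d) · ζ(j_a,j_c,j_d)^{−1} · ζ(j_a,j_b,j_d) · ζ(j_a,j_b,j_c)^{−1} = 1 holds (all four scalars being nonzero). -/
/-! Each `Λ^{n,0}_j E*` is a complex line: for a basis `e` of `(E, j)` over `ℂ` it is spanned by the
determinant form `α = z₁ ∧ ⋯ ∧ zₙ` of the coordinates. Evaluating `α ∧ ᾱ` at the real basis
`(e, j e)` gives the determinant `(-2i)ⁿ` of the block matrix `[[1, 1], [i, -i]]`, so `α ∧ ᾱ ≠ 0`.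
If `Ψ_{j_a,j_b} α = 0` then `α ∧ ᾱ = Ψ_{j_a,j_b} α ∧ ᾱ = 0`; hence every `Ψ` is injective. Applying
`Ψ_{j_a,j_d}` to a nonzero `α` and expanding it both ways through
`Ψ_{j_c,j_d} ∘ Ψ_{j_b,j_c} ∘ Ψ_{j_a,j_b}` gives
`ζ(j_a,j_b,j_d) ζ(j_b,j_c,j_d) = ζ(j_a,j_c,j_d) ζ(j_a,j_b,j_c)`. -/

open Complex

noncomputable section

variable {E : Type*} [AddCommGroup E] [Module ℝ E]

section DetForm

variable {ι : Type*} [Fintype ι] [DecidableEq ι]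

def detForm (F : ι → E →ₗ[ℝ] ℂ) : E [⋀^ι]→ₗ[ℝ] ℂ :=
  MultilinearMap.alternatization ((MultilinearMap.mkPiAlgebra ℝ ι ℂ).compLinearMap F)

theorem detForm_apply (F : ι → E →ₗ[ℝ] ℂ) (v : ι → E) :
    detForm F v = (Matrix.of fun a i => F i (v a)).det := by
  simp [detForm, MultilinearMap.alternatization_apply, Matrix.det_apply]

theorem conjAlt_detForm {p : ℕ} (F : Fin p → E →ₗ[ℝ] ℂ) :
    conjAlt (detForm F) = detForm fun i => Complex.conjAe.toLinearMap ∘ₗ F i := by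
  rw [conjAlt, detForm, detForm, ← LinearMap.compMultilinearMap_alternatization]
  congr 1
  ext v
  simp [map_prod]

-- `domCoprod` is the unnormalised shuffle product, so no factorials appear.
theorem wedgeC_detForm {p q : ℕ} (F : Fin p → E →ₗ[ℝ] ℂ) (G : Fin q → E →ₗ[ℝ] ℂ) :
    wedgeC (detForm F) (detForm G) = (detForm (Sum.elim F G)).domDomCongr finSumFinEquiv := by
  rw [wedgeC, detForm, detForm, ← MultilinearMap.domCoprod_alternization,
    ← LinearMap.compMultilinearMap_alternatization, detForm]
  congr 2
  ext v
  simp [Fintype.prod_sum_type]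

theorem wedgeC_zero_left {p q : ℕ} (β : E [⋀^Fin q]→ₗ[ℝ] ℂ) :
    wedgeC (0 : E [⋀^Fin p]→ₗ[ℝ] ℂ) β = 0 := by
  ext v
  simp [wedgeC, ← AlternatingMap.domCoprod'_apply]

end DetForm

theorem apply_update_j_of_mem_Lam {j : E →ₗ[ℝ] E} {p : ℕ} {β : E [⋀^Fin p]→ₗ[ℝ] ℂ}
    (hβ : β ∈ Lam j p) (v : Fin p → E) (k : Fin p) :
    β (Function.update v k (j (v k))) = I * β v := by
  let i₀ : Fin p := ⟨0, k.pos⟩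
  let τ := Equiv.swap i₀ k
  have hupdate : Function.update (v ∘ τ) i₀ (j (v k)) = Function.update v k (j (v k)) ∘ τ := by
    rw [Function.update_comp_equiv]
    simp [τ]
  have h := hβ (v ∘ τ) i₀ rfl
  rw [Function.comp_apply, Equiv.swap_apply_left, hupdate, β.map_perm, β.map_perm,
    ← smul_eq_mul, smul_comm, smul_eq_mul] at h
  exact MulAction.injective (Equiv.Perm.sign τ) h

section ComplexStructure

variable [Module ℂ E] [IsScalarTower ℝ ℂ E] {j : E →ₗ[ℝ] E}

theorem exists_alternatingMap_of_mem_Lam (hI : ∀ x : E, I • x = j x) {p : ℕ}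
    {β : E [⋀^Fin p]→ₗ[ℝ] ℂ} (hβ : β ∈ Lam j p) :
    ∃ f : E [⋀^Fin p]→ₗ[ℂ] ℂ, ⇑f = ⇑β := by
  have hj (v : Fin p → E) (i : Fin p) (x : E) :
      β (Function.update v i (j x)) = I * β (Function.update v i x) := by
    simpa using apply_update_j_of_mem_Lam hβ (Function.update v i x) i
  have hsmul (v : Fin p → E) (i : Fin p) (z : ℂ) (x : E) :
      β (Function.update v i (z • x)) = z * β (Function.update v i x) := by
    have hz : z • x = (z.re : ℂ) • x + (z.im : ℂ) • j x := by
      rw [← hI, smul_smul, ← add_smul, Complex.re_add_im]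
    rw [hz, β.map_update_add, ← Complex.coe_algebraMap,
      algebraMap_smul, algebraMap_smul, β.map_update_smul,
      β.map_update_smul, hj, Complex.real_smul, Complex.real_smul]
    linear_combination β (Function.update v i x) * Complex.re_add_im z
  -- the fields quantify over every `DecidableEq (Fin p)` instance, hence `convert`
  exact ⟨{ toFun := β
           map_update_add' := fun v i x y => by convert β.map_update_add v i x y
           map_update_smul' := fun v i z x => by rw [smul_eq_mul]; convert hsmul v i z x
           map_eq_zero_of_eq' := fun v i k h hik => β.map_eq_zero_of_eq v h hik }, rfl⟩

theorem detForm_coord_apply {p : ℕ} (e : Module.Basis (Fin p) ℂ E) (v : Fin p → E) :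
    detForm (fun i => (e.coord i).restrictScalars ℝ) v = e.det v := by
  rw [detForm_apply, e.det_apply, ← Matrix.det_transpose]
  rfl

theorem Lam_eq_span_detForm_coord (hI : ∀ x : E, I • x = j x) {p : ℕ}
    (e : Module.Basis (Fin p) ℂ E) :
    Lam j p = ℂ ∙ detForm (fun i => (e.coord i).restrictScalars ℝ) := by
  apply le_antisymm
  · intro β hβ
    obtain ⟨f, hf⟩ := exists_alternatingMap_of_mem_Lam hI hβ
    refine Submodule.mem_span_singleton.mpr ⟨f e, ?_⟩
    ext v
    rw [AlternatingMap.smul_apply, detForm_coord_apply, ← hf]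
    exact (DFunLike.congr_fun (f.eq_smul_basis_det e) v).symm
  · rw [Submodule.span_singleton_le_iff_mem]
    intro v i _
    rw [detForm_coord_apply, detForm_coord_apply, ← hI, e.det.map_update_smul,
      Function.update_eq_self, smul_eq_mul]

theorem wedgeC_conjAlt_detForm_coord_ne_zero (hI : ∀ x : E, I • x = j x) {p : ℕ}
    (e : Module.Basis (Fin p) ℂ E) :
    wedgeC (detForm fun i => (e.coord i).restrictScalars ℝ)
      (conjAlt (detForm fun i => (e.coord i).restrictScalars ℝ)) ≠ 0 := by
  rw [conjAlt_detForm, wedgeC_detForm]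
  intro h
  have h0 := DFunLike.congr_fun h (Sum.elim e (j ∘ e) ∘ finSumFinEquiv.symm)
  rw [AlternatingMap.domDomCongr_apply, Function.comp_assoc, Equiv.symm_comp_self,
    Function.comp_id, detForm_apply] at h0
  have hblock : Matrix.of (fun a x => Sum.elim (fun i => (e.coord i).restrictScalars ℝ)
      (fun i => Complex.conjAe.toLinearMap ∘ₗ (e.coord i).restrictScalars ℝ) x
        (Sum.elim e (j ∘ e) a)) =
      Matrix.fromBlocks 1 1 (I • 1) (-I • 1) := by
    ext (a | a) (x | x) <;>
      simp [← hI, Matrix.one_apply, Finsupp.single_apply, apply_ite (starRingEnd ℂ), neg_ite]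
  have hdet : (Matrix.fromBlocks 1 1 (I • 1) (-I • 1) :
      Matrix (Fin p ⊕ Fin p) (Fin p ⊕ Fin p) ℂ).det = (-2 * I) ^ p := by
    rw [Matrix.det_fromBlocks_one₁₁, Matrix.mul_one, ← sub_smul, Matrix.det_smul,
      Matrix.det_one, Fintype.card_fin, mul_one]
    ring
  rw [hblock, hdet] at h0
  exact pow_ne_zero _ (by simp) h0

end ComplexStructure

namespace IsCplxStruct

variable {j : E →ₗ[ℝ] E}

theorem mul_self_eq_neg_one (hj : IsCplxStruct j) : j * j = -1 :=
  LinearMap.ext hj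

abbrev toModule (hj : IsCplxStruct j) : Module ℂ E :=
  Module.compHom E (Complex.liftAux j hj.mul_self_eq_neg_one).toRingHom

theorem exists_Lam_eq_span [FiniteDimensional ℝ E] (hj : IsCplxStruct j) {n : ℕ}
    (hdim : Module.finrank ℝ E = 2 * n) :
    ∃ α : E [⋀^Fin n]→ₗ[ℝ] ℂ, Lam j n = ℂ ∙ α ∧ wedgeC α (conjAlt α) ≠ 0 := by
  let := hj.toModule
  have : IsScalarTower ℝ ℂ E := .of_algebraMap_smul fun r x => by
    show Complex.liftAux j hj.mul_self_eq_neg_one (algebraMap ℝ ℂ r) x = r • x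
    rw [AlgHom.commutes]
    rfl
  have hI : ∀ x : E, I • x = j x := fun x => by
    show Complex.liftAux j hj.mul_self_eq_neg_one I x = j x
    rw [Complex.liftAux_apply_I]
  have : Module.Finite ℂ E := .of_restrictScalars_finite ℝ ℂ E
  have hrank : Module.finrank ℂ E = n := by
    have h := Module.finrank_mul_finrank ℝ ℂ E
    rw [Complex.finrank_real_complex, hdim] at h
    omega
  let e := Module.finBasisOfFinrankEq ℂ E hrank
  exact ⟨_, Lam_eq_span_detForm_coord hI e, wedgeC_conjAlt_detForm_coord_ne_zero hI e⟩

end IsCplxStruct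

theorem PsiProp.injective [FiniteDimensional ℝ E] {ω : E [⋀^Fin 2]→ₗ[ℝ] ℝ} {n : ℕ}
    {ja jb : E →ₗ[ℝ] E} {Ψ : Lam ja n →ₗ[ℂ] Lam jb n} (hΨ : PsiProp ω n ja jb Ψ)
    (hja : IsCplxStruct ja) (hdim : Module.finrank ℝ E = 2 * n) :
    Function.Injective Ψ := by
  obtain ⟨α, hspan, hα⟩ := hja.exists_Lam_eq_span hdim
  have hαmem : α ∈ Lam ja n := hspan ▸ Submodule.mem_span_singleton_self α
  have hΨα : Ψ ⟨α, hαmem⟩ ≠ 0 := by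
    intro h0
    have h := hΨ ⟨α, hαmem⟩ ⟨α, hαmem⟩
    rw [h0, ZeroMemClass.coe_zero, wedgeC_zero_left] at h
    exact hα h.symm
  rw [injective_iff_map_eq_zero]
  intro γ hγ
  have hγspan : (γ : E [⋀^Fin n]→ₗ[ℝ] ℂ) ∈ ℂ ∙ α := hspan ▸ γ.2
  obtain ⟨c, hc⟩ := Submodule.mem_span_singleton.mp hγspan
  obtain rfl : c • ⟨α, hαmem⟩ = γ := Subtype.ext hc
  rw [map_smul] at hγ
  rw [(smul_eq_zero.mp hγ).resolve_right hΨα, zero_smul]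

theorem IsCplxStruct.nontrivial_Lam [FiniteDimensional ℝ E] {j : E →ₗ[ℝ] E}
    (hj : IsCplxStruct j) {n : ℕ} (hdim : Module.finrank ℝ E = 2 * n) :
    Nontrivial (Lam j n) := by
  obtain ⟨α, hspan, hα⟩ := hj.exists_Lam_eq_span hdim
  have hα0 : α ≠ 0 := by
    rintro rfl
    exact hα (wedgeC_zero_left _)
  rw [Submodule.nontrivial_iff_ne_bot, hspan, Ne, Submodule.span_singleton_eq_bot]
  exact hα0

theorem scalar_cocycle_of_injective {K V₁ V₂ V₃ V₄ : Type*} [Field K]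
    [AddCommGroup V₁] [Module K V₁] [Nontrivial V₁] [AddCommGroup V₂] [Module K V₂]
    [AddCommGroup V₃] [Module K V₃] [AddCommGroup V₄] [Module K V₄]
    {f₁₂ : V₁ →ₗ[K] V₂} {f₁₃ : V₁ →ₗ[K] V₃} {f₁₄ : V₁ →ₗ[K] V₄} {f₂₃ : V₂ →ₗ[K] V₃}
    {f₂₄ : V₂ →ₗ[K] V₄} {f₃₄ : V₃ →ₗ[K] V₄} (h₁₂ : Function.Injective f₁₂)
    (h₂₃ : Function.Injective f₂₃) (h₃₄ : Function.Injective f₃₄)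
    (h₁₄ : Function.Injective f₁₄) {z₁ z₂ z₃ z₄ : K}
    (hz₁ : f₂₄ = z₁ • (f₃₄ ∘ₗ f₂₃)) (hz₂ : f₁₄ = z₂ • (f₃₄ ∘ₗ f₁₃))
    (hz₃ : f₁₄ = z₃ • (f₂₄ ∘ₗ f₁₂)) (hz₄ : f₁₃ = z₄ • (f₂₃ ∘ₗ f₁₂)) :
    z₁ ≠ 0 ∧ z₂ ≠ 0 ∧ z₃ ≠ 0 ∧ z₄ ≠ 0 ∧ z₁ * z₂⁻¹ * z₃ * z₄⁻¹ = 1 := by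
  obtain ⟨x, hx⟩ := exists_ne (0 : V₁)
  have hd : f₃₄ (f₂₃ (f₁₂ x)) ≠ 0 := by
    simpa [map_ne_zero_iff _ h₃₄, map_ne_zero_iff _ h₂₃, map_ne_zero_iff _ h₁₂] using hx
  have hf₁₄x : f₁₄ x ≠ 0 := (map_ne_zero_iff _ h₁₄).mpr hx
  have h₃₁ : f₁₄ x = (z₃ * z₁) • f₃₄ (f₂₃ (f₁₂ x)) := by
    rw [hz₃, hz₁]
    simp [mul_smul]
  have h₂₄ : f₁₄ x = (z₂ * z₄) • f₃₄ (f₂₃ (f₁₂ x)) := by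
    rw [hz₂, hz₄]
    simp [mul_smul]
  obtain ⟨hz₃, hz₁⟩ := mul_ne_zero_iff.mp (left_ne_zero_of_smul (h₃₁ ▸ hf₁₄x))
  obtain ⟨hz₂, hz₄⟩ := mul_ne_zero_iff.mp (left_ne_zero_of_smul (h₂₄ ▸ hf₁₄x))
  have heq : z₃ * z₁ = z₂ * z₄ := smul_left_injective K hd (h₃₁.symm.trans h₂₄)
  refine ⟨hz₁, hz₂, hz₃, hz₄, ?_⟩
  field_simp
  linear_combination heq

theorem statement4_general {E : Type*} [AddCommGroup E] [Module ℝ E] [FiniteDimensional ℝ E]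
    (n : ℕ) (ω : E [⋀^Fin 2]→ₗ[ℝ] ℝ)
    (hdim : Module.finrank ℝ E = 2 * n)
    (ja jb jc jd : E →ₗ[ℝ] E)
    (hja : IsCplxStruct ja) (hjb : IsCplxStruct jb)
    (hjc : IsCplxStruct jc)
    (Ψab : Lam ja n →ₗ[ℂ] Lam jb n) (hΨab : PsiProp ω n ja jb Ψab)
    (Ψac : Lam ja n →ₗ[ℂ] Lam jc n)
    (Ψad : Lam ja n →ₗ[ℂ] Lam jd n) (hΨad : PsiProp ω n ja jd Ψad)
    (Ψbc : Lam jb n →ₗ[ℂ] Lam jc n) (hΨbc : PsiProp ω n jb jc Ψbc)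
    (Ψbd : Lam jb n →ₗ[ℂ] Lam jd n)
    (Ψcd : Lam jc n →ₗ[ℂ] Lam jd n) (hΨcd : PsiProp ω n jc jd Ψcd)
    (z₁ z₂ z₃ z₄ : ℂ)
    (hz₁ : Ψbd = z₁ • (Ψcd ∘ₗ Ψbc))
    (hz₂ : Ψad = z₂ • (Ψcd ∘ₗ Ψac))
    (hz₃ : Ψad = z₃ • (Ψbd ∘ₗ Ψab))
    (hz₄ : Ψac = z₄ • (Ψbc ∘ₗ Ψab)) :
    z₁ ≠ 0 ∧ z₂ ≠ 0 ∧ z₃ ≠ 0 ∧ z₄ ≠ 0 ∧ z₁ * z₂⁻¹ * z₃ * z₄⁻¹ = 1 := by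
  have := hja.nontrivial_Lam hdim
  exact scalar_cocycle_of_injective (hΨab.injective hja hdim) (hΨbc.injective hjb hdim)
    (hΨcd.injective hjc hdim) (hΨad.injective hja hdim) hz₁ hz₂ hz₃ hz₄

/-- the cocycle relation
`ζ(j_b,j_c,j_d) · ζ(j_a,j_c,j_d)⁻¹ · ζ(j_a,j_b,j_d) · ζ(j_a,j_b,j_c)⁻¹ = 1`,
all four scalars being nonzero. -/
theorem statement4 {E : Type*} [AddCommGroup E] [Module ℝ E] [FiniteDimensional ℝ E]
    (n : ℕ) (hn : 0 < n) (ω : E [⋀^Fin 2]→ₗ[ℝ] ℝ)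
    (hdim : Module.finrank ℝ E = 2 * n) (hnd : OmNondeg ω)
    (ja jb jc jd : E →ₗ[ℝ] E)
    (hja : IsCplxStruct ja) (hjb : IsCplxStruct jb)
    (hjc : IsCplxStruct jc) (hjd : IsCplxStruct jd)
    (hca : OmCompat ω ja) (hcb : OmCompat ω jb)
    (hcc : OmCompat ω jc) (hcd : OmCompat ω jd)
    (hpa : OmPos ω ja) (hpb : OmPos ω jb) (hpc : OmPos ω jc) (hpd : OmPos ω jd)
    (Ψab : Lam ja n →ₗ[ℂ] Lam jb n) (hΨab : PsiProp ω n ja jb Ψab)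
    (Ψac : Lam ja n →ₗ[ℂ] Lam jc n) (hΨac : PsiProp ω n ja jc Ψac)
    (Ψad : Lam ja n →ₗ[ℂ] Lam jd n) (hΨad : PsiProp ω n ja jd Ψad)
    (Ψbc : Lam jb n →ₗ[ℂ] Lam jc n) (hΨbc : PsiProp ω n jb jc Ψbc)
    (Ψbd : Lam jb n →ₗ[ℂ] Lam jd n) (hΨbd : PsiProp ω n jb jd Ψbd)
    (Ψcd : Lam jc n →ₗ[ℂ] Lam jd n) (hΨcd : PsiProp ω n jc jd Ψcd)
    (z₁ z₂ z₃ z₄ : ℂ)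
    (hz₁ : Ψbd = z₁ • (Ψcd ∘ₗ Ψbc))
    (hz₂ : Ψad = z₂ • (Ψcd ∘ₗ Ψac))
    (hz₃ : Ψad = z₃ • (Ψbd ∘ₗ Ψab))
    (hz₄ : Ψac = z₄ • (Ψbc ∘ₗ Ψab)) :
    z₁ ≠ 0 ∧ z₂ ≠ 0 ∧ z₃ ≠ 0 ∧ z₄ ≠ 0 ∧ z₁ * z₂⁻¹ * z₃ * z₄⁻¹ = 1 :=
  statement4_general n ω hdim ja jb jc jd hja hjb hjc Ψab hΨab Ψac Ψad hΨad Ψbc hΨbc Ψbd Ψcd hΨcd z₁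
    z₂ z₃ z₄ hz₁ hz₂ hz₃ hz₄

end
end
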